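/- Let G be a weighted undirected graph partitioned into G_1, ..., G_k. Form the augmented subgraph G'_i by adding, for each pair of boundary vertices b_1, b_2 ∈ B_i, an edge of weight d_G(b_1, b_2) (the global shortest distance in G). Then for all s, t ∈ G_i (boundary or not), d_{G'_i}(s, t) = d_G(s, t). -/

import Mathlib

open scoped ENNReal Classical

namespace PSP

/-- A weighted undirected graph: symmetric adjacency and a weight function
with values in `ℝ≥0∞` (so weights are non-negative). -/
structure WGraph (V : Type*) where
  Adj : V → V → Prop
  symm : ∀ {u v}, Adj u v → Adj v u
  w : V → V → ℝ≥0∞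

variable {V : Type*} {ι : Type*}

/-- Sum of `f` over consecutive pairs of a list. -/
noncomputable def pairSum (f : V → V → ℝ≥0∞) : List V → ℝ≥0∞
  | a :: b :: rest => f a b + pairSum f (b :: rest)
  | _ => 0

/-- Weighted length of a walk (given as a list of vertices). -/
noncomputable def wlen (G : WGraph V) (l : List V) : ℝ≥0∞ := pairSum G.w l

/-- `l` is a walk in `G` from `s` to `t`: consecutive vertices are adjacent,
the first vertex is `s` and the last is `t`. -/
def IsWalk (G : WGraph V) (s t : V) (l : List V) : Prop :=
  l.Chain' G.Adj ∧ l.head? = some s ∧ l.getLast? = some t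

/-- Shortest-path distance in `G` (`⊤` if no walk exists). -/
noncomputable def dist (G : WGraph V) (s t : V) : ℝ≥0∞ :=
  sInf {x | ∃ l, IsWalk G s t l ∧ wlen G l = x}

/-- Induced subgraph on a vertex set `S`. -/
def induce (G : WGraph V) (S : Set V) : WGraph V where
  Adj u v := G.Adj u v ∧ u ∈ S ∧ v ∈ S
  symm h := ⟨G.symm h.1, h.2.2, h.2.1⟩
  w := G.w

/-- A partition of the vertex set is given by a function `P : V → ι`
assigning each vertex its partition index. The set of all boundary
vertices: vertices having a neighbor in another partition. -/
def bdry (G : WGraph V) (P : V → ι) : Set V :=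
  {v | ∃ u, G.Adj v u ∧ P u ≠ P v}

/-- Boundary vertices of partition `i`. -/
def bdryIn (G : WGraph V) (P : V → ι) (i : ι) : Set V :=
  {v | P v = i ∧ ∃ u, G.Adj v u ∧ P u ≠ i}

/-- The induced subgraph `G_i` of partition `i`. -/
def partGraph (G : WGraph V) (P : V → ι) (i : ι) : WGraph V :=
  induce G {x | P x = i}

/-- The No-Boundary overlay graph `G̃`: vertices are boundary vertices; for each
partition, each boundary pair gets an edge of weight equal to the *local*
partition distance; inter-partition edges of `G` keep their original weight. -/
noncomputable def overlay (G : WGraph V) (P : V → ι) : WGraph V where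
  Adj u v := (P u = P v ∧ u ∈ bdry G P ∧ v ∈ bdry G P) ∨ (P u ≠ P v ∧ G.Adj u v)
  symm := by
    rintro u v (⟨h1, h2, h3⟩ | ⟨h1, h2⟩)
    · exact Or.inl ⟨h1.symm, h3, h2⟩
    · exact Or.inr ⟨fun h => h1 h.symm, G.symm h2⟩
  w u v := if P u = P v then dist (partGraph G P (P u)) u v else G.w u v

/-- A half-connected boundary vertex: has a non-boundary neighbor in its own partition. -/
def halfC (G : WGraph V) (P : V → ι) (b : V) : Prop :=
  b ∈ bdry G P ∧ ∃ u, G.Adj b u ∧ P u = P b ∧ u ∉ bdry G P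

/-- A full-connected boundary vertex: all in-partition neighbors are boundary vertices. -/
def fullC (G : WGraph V) (P : V → ι) (b : V) : Prop :=
  b ∈ bdry G P ∧ ∀ u, G.Adj b u → P u = P b → u ∈ bdry G P

/-- The pruned overlay graph `G̃'`, with inserted boundary-pair weights `ω`:
edges among half-connected boundary pairs of the same partition (weight `ω`),
all inter-partition edges, and the original in-partition adjacent edges of
full-connected boundary vertices. -/
noncomputable def pruned (G : WGraph V) (P : V → ι) (ω : V → V → ℝ≥0∞) : WGraph V where
  Adj u v :=
    (P u = P v ∧ halfC G P u ∧ halfC G P v) ∨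
    (P u ≠ P v ∧ G.Adj u v) ∨
    (P u = P v ∧ G.Adj u v ∧ u ∈ bdry G P ∧ v ∈ bdry G P ∧ (fullC G P u ∨ fullC G P v))
  symm := by
    rintro u v (⟨h1, h2, h3⟩ | ⟨h1, h2⟩ | ⟨h1, h2, h3, h4, h5⟩)
    · exact Or.inl ⟨h1.symm, h3, h2⟩
    · exact Or.inr (Or.inl ⟨fun h => h1 h.symm, G.symm h2⟩)
    · exact Or.inr (Or.inr ⟨h1.symm, G.symm h2, h4, h3, h5.symm⟩)
  w u v := if P u = P v ∧ halfC G P u ∧ halfC G P v then ω u v else G.w u v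

/-- The augmented partition graph `G'_i`: the induced subgraph `G_i` plus, for each
boundary pair `b₁ b₂ ∈ B_i`, an inserted edge of weight `ω b₁ b₂` (taking the
minimum with an already-existing edge weight). -/
noncomputable def augment (G : WGraph V) (P : V → ι) (i : ι) (ω : V → V → ℝ≥0∞) : WGraph V where
  Adj u v := (G.Adj u v ∧ P u = i ∧ P v = i) ∨ (u ∈ bdryIn G P i ∧ v ∈ bdryIn G P i)
  symm := by
    rintro u v (⟨h1, h2, h3⟩ | ⟨h1, h2⟩)
    · exact Or.inl ⟨G.symm h1, h3, h2⟩
    · exact Or.inr ⟨h2, h1⟩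
  w u v :=
    if u ∈ bdryIn G P i ∧ v ∈ bdryIn G P i then
      (if G.Adj u v ∧ P u = i ∧ P v = i then min (ω u v) (G.w u v) else ω u v)
    else G.w u v

/-- Graph obtained from `G` by adding, for every pair `u v ∈ S`, a shortcut edge
of weight `dist G u v` (taking the minimum with an already-existing edge weight). -/
noncomputable def shortcut (G : WGraph V) (S : Set V) : WGraph V where
  Adj u v := G.Adj u v ∨ (u ∈ S ∧ v ∈ S)
  symm := by
    rintro u v (h | ⟨h1, h2⟩)
    · exact Or.inl (G.symm h)
    · exact Or.inr ⟨h2, h1⟩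
  w u v :=
    if u ∈ S ∧ v ∈ S then
      (if G.Adj u v then min (dist G u v) (G.w u v) else dist G u v)
    else G.w u v

/-- Vertex-splitting construction: each cut vertex `x ∈ X` keeps its neighbors in
group `N x 0`; for `1 ≤ i ≤ l x` a duplicate `(x, i)` is created, connected to the
vertices of `N x i` with the original weights and to `x` by a zero-weight edge. -/
noncomputable def split (G : WGraph V) (X : Set V) (N : V → ℕ → Set V) (l : V → ℕ) :
    WGraph (V ⊕ V × ℕ) where
  Adj a b := match a, b with
    | .inl u, .inl v => G.Adj u v ∧ (u ∈ X → v ∈ N u 0) ∧ (v ∈ X → u ∈ N v 0)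
    | .inl v, .inr (x, i) => x ∈ X ∧ 1 ≤ i ∧ i ≤ l x ∧ ((G.Adj x v ∧ v ∈ N x i) ∨ v = x)
    | .inr (x, i), .inl v => x ∈ X ∧ 1 ≤ i ∧ i ≤ l x ∧ ((G.Adj x v ∧ v ∈ N x i) ∨ v = x)
    | .inr _, .inr _ => False
  symm := by
    rintro (u | ⟨x, i⟩) (v | ⟨y, j⟩) h
    · exact ⟨G.symm h.1, h.2.2, h.2.1⟩
    · exact h
    · exact h
    · exact h.elim
  w a b := match a, b with
    | .inl u, .inl v => G.w u v
    | .inl v, .inr (x, _) => if v = x then 0 else G.w x v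
    | .inr (x, _), .inl v => if v = x then 0 else G.w x v
    | .inr _, .inr _ => 0


/-! Let `G'` be the augmented graph. Every edge of `G'` weighs at least the `G`-distance of
its ends, so `d_G ≤ d_{G'}`. Conversely, a walk of `G` between two vertices of `G_i` consists
of stretches inside `G_i`, which are walks of `G'`, and excursions out of `G_i`; an excursion
leaves and re-enters `G_i` at boundary vertices of `B_i`, so it can be replaced by the
inserted edge between them, whose weight `d_G` is at most the length of the excursion. -/

section Walks

variable {G : WGraph V} {s t u v : V} {l : List V}

@[simp]
lemma wlen_cons_cons (G : WGraph V) (u v : V) (l : List V) :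
    wlen G (u :: v :: l) = G.w u v + wlen G (v :: l) := rfl

lemma IsWalk.singleton (G : WGraph V) (v : V) : IsWalk G v v [v] :=
  ⟨List.isChain_singleton v, rfl, rfl⟩

lemma IsWalk.cons (h : G.Adj u v) (hl : IsWalk G v t (v :: l)) :
    IsWalk G u t (u :: v :: l) :=
  ⟨List.isChain_cons_cons.mpr ⟨h, hl.1⟩, rfl, by simpa using hl.2.2⟩

@[elab_as_elim]
lemma IsWalk.induction {motive : V → List V → Prop} (singleton : motive t [t])
    (cons : ∀ u v l, G.Adj u v → motive v (v :: l) → motive u (u :: v :: l))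
    (h : IsWalk G s t l) : motive s l := by
  induction l generalizing s with
  | nil => simp [IsWalk] at h
  | cons a l ih =>
    obtain ⟨hc, hs, ht⟩ := h
    obtain rfl : a = s := by simpa using hs
    cases l with
    | nil =>
      obtain rfl : a = t := by simpa using ht
      exact singleton
    | cons b l =>
      obtain ⟨hab, hc⟩ := List.isChain_cons_cons.mp hc
      exact cons a b l hab (ih ⟨hc, rfl, by simpa using ht⟩)

end Walks

section Distance

variable {G H : WGraph V} {s t u v w : V} {l : List V} {x : ℝ≥0∞}

lemma dist_le_wlen (h : IsWalk G s t l) : dist G s t ≤ wlen G l :=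
  sInf_le ⟨l, h, rfl⟩

lemma le_dist (h : ∀ l, IsWalk G s t l → x ≤ wlen G l) : x ≤ dist G s t :=
  le_sInf <| by
    rintro _ ⟨l, hl, rfl⟩
    exact h l hl

@[simp]
lemma dist_self (G : WGraph V) (v : V) : dist G v v = 0 :=
  nonpos_iff_eq_zero.mp <| dist_le_wlen (IsWalk.singleton G v)

lemma dist_le_weight_add_dist (h : G.Adj u v) : dist G u w ≤ G.w u v + dist G v w := by
  rw [← tsub_le_iff_left]
  refine le_dist fun l hl => ?_
  obtain ⟨l, rfl⟩ : ∃ l', l = v :: l' := by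
    obtain ⟨_, hv, -⟩ := hl
    cases l <;> simp_all
  rw [tsub_le_iff_left, ← wlen_cons_cons]
  exact dist_le_wlen (hl.cons h)

lemma dist_le_weight (h : G.Adj u v) : dist G u v ≤ G.w u v := by
  simpa using dist_le_weight_add_dist (w := v) h

lemma dist_triangle (G : WGraph V) (u v w : V) : dist G u w ≤ dist G u v + dist G v w := by
  rw [← tsub_le_iff_right]
  refine le_dist fun l hl => ?_
  rw [tsub_le_iff_right]
  refine IsWalk.induction (by simp) (fun a b l hab ih => ?_) hl
  calc dist G a w ≤ G.w a b + dist G b w := dist_le_weight_add_dist hab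
      _ ≤ G.w a b + (wlen G (b :: l) + dist G v w) := by gcongr
      _ = wlen G (a :: b :: l) + dist G v w := by rw [wlen_cons_cons, add_assoc]

lemma dist_le_dist_add_weight (h : G.Adj u v) : dist G w v ≤ dist G w u + G.w u v :=
  (dist_triangle G w u v).trans (add_le_add_right (dist_le_weight h) _)

lemma dist_le_dist_of_forall_adj (h : ∀ u v, H.Adj u v → dist G u v ≤ H.w u v) (s t : V) :
    dist G s t ≤ dist H s t := by
  refine le_dist fun l hl => ?_
  refine IsWalk.induction (by simp) (fun a b l hab ih => ?_) hl
  calc dist G a t ≤ dist G a b + dist G b t := dist_triangle G a b t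
    _ ≤ H.w a b + wlen H (b :: l) := add_le_add (h a b hab) ih
    _ = wlen H (a :: b :: l) := rfl

end Distance

section Augment

variable {G : WGraph V} {P : V → ι} {i : ι} {ω : V → V → ℝ≥0∞} {s t u v : V} {l : List V}

lemma augment_adj_of_adj (h : G.Adj u v) (hu : P u = i) (hv : P v = i) :
    (augment G P i ω).Adj u v :=
  Or.inl ⟨h, hu, hv⟩

lemma augment_adj_of_mem_bdryIn (hu : u ∈ bdryIn G P i) (hv : v ∈ bdryIn G P i) :
    (augment G P i ω).Adj u v :=
  Or.inr ⟨hu, hv⟩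

lemma augment_w_le_w (h : G.Adj u v) (hu : P u = i) (hv : P v = i) :
    (augment G P i ω).w u v ≤ G.w u v := by
  simp only [augment]
  split_ifs with hB hG
  · exact min_le_right _ _
  · exact (hG ⟨h, hu, hv⟩).elim
  · exact le_rfl

lemma augment_w_le_of_mem_bdryIn (hu : u ∈ bdryIn G P i) (hv : v ∈ bdryIn G P i) :
    (augment G P i ω).w u v ≤ ω u v := by
  simp only [augment, hu, hv, and_self, if_true]
  split_ifs
  · exact min_le_left _ _
  · exact le_rfl

lemma dist_le_dist_augment (hω : ∀ u ∈ bdryIn G P i, ∀ v ∈ bdryIn G P i, dist G u v ≤ ω u v)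
    (s t : V) : dist G s t ≤ dist (augment G P i ω) s t := by
  refine dist_le_dist_of_forall_adj (fun u v huv => ?_) s t
  simp only [augment]
  split_ifs with hB hG
  · exact le_min (hω u hB.1 v hB.2) (dist_le_weight hG.1)
  · exact hω u hB.1 v hB.2
  · obtain ⟨h, -⟩ | hB' := huv
    · exact dist_le_weight h
    · exact (hB hB').elim

/-- While the walk is outside `G_i`, it is charged from an arbitrary boundary vertex `b`:
the excursion will be replaced by the inserted edge from `b` to its re-entry vertex. -/
lemma dist_augment_le_wlen (hω : ∀ u ∈ bdryIn G P i, ∀ v ∈ bdryIn G P i, ω u v ≤ dist G u v)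
    (ht : P t = i) (hl : IsWalk G s t l) :
    (P s = i → dist (augment G P i ω) s t ≤ wlen G l) ∧
      (P s ≠ i → ∀ b ∈ bdryIn G P i, dist (augment G P i ω) b t ≤ dist G b s + wlen G l) := by
  refine IsWalk.induction ⟨fun _ => by simp, fun h => (h ht).elim⟩
    (fun a m l ham ih => ?_) hl
  set G' := augment G P i ω
  rw [wlen_cons_cons]
  constructor
  · intro ha
    by_cases hm : P m = i
    · calc dist G' a t ≤ G'.w a m + dist G' m t :=
            dist_le_weight_add_dist (augment_adj_of_adj ham ha hm)
        _ ≤ G.w a m + wlen G (m :: l) := add_le_add (augment_w_le_w ham ha hm) (ih.1 hm)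
    · calc dist G' a t ≤ dist G a m + wlen G (m :: l) := ih.2 hm a ⟨ha, m, ham, hm⟩
        _ ≤ G.w a m + wlen G (m :: l) := by gcongr; exact dist_le_weight ham
  · intro ha b hb
    by_cases hm : P m = i
    · have hmB : m ∈ bdryIn G P i := ⟨hm, a, G.symm ham, ha⟩
      calc dist G' b t ≤ G'.w b m + dist G' m t :=
            dist_le_weight_add_dist (augment_adj_of_mem_bdryIn hb hmB)
        _ ≤ dist G b m + wlen G (m :: l) :=
            add_le_add ((augment_w_le_of_mem_bdryIn hb hmB).trans (hω b hb m hmB)) (ih.1 hm)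
        _ ≤ dist G b a + (G.w a m + wlen G (m :: l)) := by
            rw [← add_assoc]; gcongr; exact dist_le_dist_add_weight ham
    · calc dist G' b t ≤ dist G b m + wlen G (m :: l) := ih.2 hm b hb
        _ ≤ dist G b a + (G.w a m + wlen G (m :: l)) := by
            rw [← add_assoc]; gcongr; exact dist_le_dist_add_weight ham

lemma dist_augment_le_dist (hω : ∀ u ∈ bdryIn G P i, ∀ v ∈ bdryIn G P i, ω u v ≤ dist G u v)
    (hs : P s = i) (ht : P t = i) : dist (augment G P i ω) s t ≤ dist G s t :=
  le_dist fun _ hl => (dist_augment_le_wlen hω ht hl).1 hs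

end Augment

/-- Pre-Boundary correctness: the partition graph augmented with
global boundary-pair distances answers every same-partition query exactly. -/
theorem stmt10 {V ι : Type*} (G : WGraph V) (P : V → ι) (i : ι) :
    ∀ s t : V, P s = i → P t = i →
      dist (augment G P i (dist G)) s t = dist G s t := fun s t hs ht =>
  le_antisymm (dist_augment_le_dist (fun _ _ _ _ => le_rfl) hs ht)
    (dist_le_dist_augment (fun _ _ _ _ => le_rfl) s t)

end PSP
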